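/- Let m ≥ 1, β ∈ ℝ, and let J be the m×m complex matrix with iβ on the diagonal and 1 on the superdiagonal (a Jordan block with eigenvalue iβ). Let S ⊆ ℂ^m × ℂ^m be the closure of {(w, e^{tJ}w) : w ∈ ℂ^m, t ∈ ℝ}. Then the set {0} ∪ {x ∈ ℂ^m : (x, 0) ∈ S} equals the linear subspace {x ∈ ℂ^m : x_j = 0 for all j > ⌊m/2⌋} (coordinates indexed 1,…,m in the Jordan basis). -/

import Mathlib

/-!
Write `J = iβ + N` with `N` the nilpotent shift, so `e^{tJ} = e^{iβt} e^{tN}`.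

For `c ≥ m - 1` the signed antidiagonal matrix `K_c` (entries `(-1)^i` on `i + j = c`) satisfies
`Nᵀ K_c = K_c (-N)`, hence `(e^{tN})ᵀ K_c e^{tN} = K_c`: the quadratic form
`Q_c(u) = ∑_{i+j=c} (-1)^i u_i u_j` is invariant under `e^{tN}`, and `|Q_c|` under `e^{tJ}`.
By continuity `|Q_c|` takes equal values at both ends of every pair in the closure, so
`(x, 0) ∈ S` forces `Q_c(x) = 0` for all `c ≥ m - 1`. If `j ≥ ⌊m/2⌋` is the last index with
`x_j ≠ 0`, then `Q_{2j}(x) = ± x_j²`, a contradiction.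

Conversely let `p = ⌊m/2⌋ ≤ q = m - p` and `x` be supported on the first `p` coordinates.
Solving for a vector supported on the last `p` coordinates whose image under `e^N` has
prescribed first `p` coordinates is a Hermite interpolation problem with matrix
`(1/(q+l-j)!)_{j,l}`, a Vandermonde matrix of descending Pochhammer polynomials up to a
diagonal factor, hence solvable. Since `e^{sN} D_s⁻¹ = D_s⁻¹ e^N` for `D_s = diag(s^k)`, scaling
such solutions gives `y_s → 0` with `e^{sN} y_s → x`; the orbit pairs
`(e^{sN} y_s, e^{-sJ} e^{sN} y_s) = (e^{sN} y_s, e^{-iβs} y_s)` then converge to `(x, 0)`.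
-/

/-- The `m × m` complex Jordan block with `iβ` on the diagonal and `1` on the
superdiagonal. -/
noncomputable def jordanBlockI (m : ℕ) (β : ℝ) : Matrix (Fin m) (Fin m) ℂ :=
  Matrix.of fun i j => if (i : ℕ) = (j : ℕ) then Complex.I * (β : ℂ)
    else if (i : ℕ) + 1 = (j : ℕ) then 1 else 0

/-- The closure of the set of pairs of points lying on a common orbit of `e^{tJ}`. -/
noncomputable def orbitPairClosure (m : ℕ) (β : ℝ) : Set ((Fin m → ℂ) × (Fin m → ℂ)) :=
  closure {q | ∃ (w : Fin m → ℂ) (t : ℝ),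
    q = (w, (NormedSpace.exp (t • jordanBlockI m β)).mulVec w)}

open Finset Matrix Filter Topology

theorem NormedSpace.exp_eq_sum_of_pow_eq_zero {𝔸 : Type*} [Ring 𝔸] [TopologicalSpace 𝔸]
    [IsTopologicalRing 𝔸] [Algebra ℚ 𝔸] {a : 𝔸} {k : ℕ} (h : a ^ k = 0) :
    NormedSpace.exp a = ∑ r ∈ range k, (r.factorial : ℚ)⁻¹ • a ^ r := by
  rw [NormedSpace.exp_eq_tsum_rat]
  refine tsum_eq_sum fun r hr => ?_
  rw [pow_eq_zero_of_le (by simpa using hr) h, smul_zero]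

theorem SemiconjBy.exp_of_pow_eq_zero {𝔸 : Type*} [Ring 𝔸] [TopologicalSpace 𝔸]
    [IsTopologicalRing 𝔸] [Algebra ℚ 𝔸] {a x y : 𝔸} {k : ℕ} (h : SemiconjBy a x y)
    (hx : x ^ k = 0) (hy : y ^ k = 0) :
    SemiconjBy a (NormedSpace.exp x) (NormedSpace.exp y) := by
  rw [SemiconjBy, NormedSpace.exp_eq_sum_of_pow_eq_zero hx,
    NormedSpace.exp_eq_sum_of_pow_eq_zero hy, Finset.mul_sum, Finset.sum_mul]
  refine Finset.sum_congr rfl fun r _ => ?_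
  rw [mul_smul_comm, smul_mul_assoc, (h.pow_right r).eq]

section Semiring

variable {R : Type*} [Semiring R] {m : ℕ}

variable (R m) in
def shiftMatrix : Matrix (Fin m) (Fin m) R :=
  of fun i j => if (i : ℕ) + 1 = j then 1 else 0

theorem shiftMatrix_pow_apply (r : ℕ) (i j : Fin m) :
    (shiftMatrix R m ^ r) i j = if (i : ℕ) + r = j then 1 else 0 := by
  induction r generalizing j with
  | zero => simp [one_apply, Fin.ext_iff]
  | succ r ih =>
    rw [pow_succ, mul_apply]
    simp_rw [ih]
    simp only [shiftMatrix, of_apply, ite_mul, one_mul, zero_mul]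
    by_cases h : (i : ℕ) + (r + 1) = j
    · rw [Finset.sum_eq_single ⟨i + r, by omega⟩
        (fun k _ hk => if_neg fun h' => hk (Fin.ext h'.symm)) (by simp)]
      simp only [if_true]
      rw [if_pos h, if_pos (by omega)]
    · rw [if_neg h]
      exact Finset.sum_eq_zero fun k _ => by split_ifs <;> first | rfl | omega

theorem shiftMatrix_pow_self : shiftMatrix R m ^ m = 0 := by
  ext i j
  simp [shiftMatrix_pow_apply]
  omega

end Semiring

section Ring

variable {R : Type*} [Ring R] {m c : ℕ}

variable (R m) in
def signedAntidiag (c : ℕ) : Matrix (Fin m) (Fin m) R :=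
  of fun i j => if (i : ℕ) + j = c then (-1) ^ (i : ℕ) else 0

theorem semiconjBy_signedAntidiag (hc : m ≤ c + 1) :
    SemiconjBy (signedAntidiag R m c) (-shiftMatrix R m) (shiftMatrix R m)ᵀ := by
  rw [SemiconjBy, mul_neg]
  ext i j
  simp only [Matrix.neg_apply, mul_apply, transpose_apply, signedAntidiag, shiftMatrix, of_apply,
    ite_mul, mul_ite, one_mul, zero_mul, mul_zero]
  -- Each side has at most one nonzero term; `m ≤ c + 1` keeps it away from the boundary.
  by_cases h : (i : ℕ) + j = c + 1
  · rw [Finset.sum_eq_single ⟨j - 1, by omega⟩ (fun k _ hk => ?_) (by simp),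
      Finset.sum_eq_single ⟨i - 1, by omega⟩ (fun k _ hk => ?_) (by simp)]
    · obtain ⟨i', hi'⟩ : ∃ i', (i : ℕ) = i' + 1 := ⟨i - 1, by omega⟩
      split_ifs <;> dsimp only at * <;> first | omega | simp [hi', pow_succ]
    · exact if_neg fun h' => hk (Fin.ext (by simp; omega))
    · exact if_neg fun h' => hk (Fin.ext (by simp; omega))
  · rw [neg_eq_iff_add_eq_zero, ← Finset.sum_add_distrib]
    exact Finset.sum_eq_zero fun k _ => by split_ifs <;> first | omega | simp

end Ring

variable {m : ℕ}

theorem exp_smul_shiftMatrix_apply (z : ℂ) (i j : Fin m) :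
    NormedSpace.exp (z • shiftMatrix ℂ m) i j =
      if (i : ℕ) ≤ j then z ^ ((j : ℕ) - i) / ((j : ℕ) - i).factorial else 0 := by
  have hpow : (z • shiftMatrix ℂ m) ^ m = 0 := by rw [smul_pow, shiftMatrix_pow_self, smul_zero]
  rw [NormedSpace.exp_eq_sum_of_pow_eq_zero hpow, Matrix.sum_apply]
  simp only [smul_pow, Matrix.smul_apply, shiftMatrix_pow_apply, smul_eq_mul, mul_ite, mul_one,
    mul_zero, smul_ite, smul_zero]
  split_ifs with h
  · rw [Finset.sum_eq_single_of_mem ((j : ℕ) - i) (by simp; omega)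
      (fun r _ hr => if_neg (by omega)), if_pos (by omega), Rat.smul_def]
    push_cast
    ring
  · exact Finset.sum_eq_zero fun r _ => if_neg (by omega)

theorem exp_shiftMatrix_apply (i j : Fin m) :
    NormedSpace.exp (shiftMatrix ℂ m) i j =
      if (i : ℕ) ≤ j then (((j : ℕ) - i).factorial : ℂ)⁻¹ else 0 := by
  simpa using exp_smul_shiftMatrix_apply (1 : ℂ) i j

theorem jordanBlockI_eq_smul_one_add_shiftMatrix (β : ℝ) :
    jordanBlockI m β = (Complex.I * β) • 1 + shiftMatrix ℂ m := by
  ext i j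
  simp only [jordanBlockI, shiftMatrix, of_apply, Matrix.add_apply, Matrix.smul_apply,
    Matrix.one_apply, Fin.ext_iff, smul_eq_mul]
  split_ifs <;> first | omega | simp

theorem exp_smul_jordanBlockI (β t : ℝ) :
    NormedSpace.exp (t • jordanBlockI m β) =
      Complex.exp (↑(t * β) * Complex.I) • NormedSpace.exp ((t : ℂ) • shiftMatrix ℂ m) := by
  rw [← Complex.coe_smul, jordanBlockI_eq_smul_one_add_shiftMatrix, smul_add, smul_smul,
    Matrix.exp_add_of_commute _ _ ((Commute.one_left _).smul_left _), smul_one_eq_diagonal,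
    Matrix.exp_diagonal, Pi.exp_def, ← smul_one_eq_diagonal, smul_one_mul, ← Complex.exp_eq_exp_ℂ]
  push_cast
  ring_nf

theorem transpose_exp_mul_signedAntidiag_mul_exp {c : ℕ} (hc : m ≤ c + 1) (z : ℂ) :
    (NormedSpace.exp (z • shiftMatrix ℂ m))ᵀ * signedAntidiag ℂ m c *
      NormedSpace.exp (z • shiftMatrix ℂ m) = signedAntidiag ℂ m c := by
  have hsemi := ((semiconjBy_signedAntidiag (R := ℂ) hc).smul_right z).exp_of_pow_eq_zero (k := m)
    (by rw [smul_pow, neg_pow, shiftMatrix_pow_self, mul_zero, smul_zero])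
    (by rw [smul_pow, ← transpose_pow, shiftMatrix_pow_self, transpose_zero, smul_zero])
  rw [← Matrix.exp_transpose, transpose_smul, ← hsemi.eq, mul_assoc, smul_neg,
    ← Matrix.exp_add_of_commute _ _ (Commute.refl (z • shiftMatrix ℂ m)).neg_left, neg_add_cancel,
    NormedSpace.exp_zero, mul_one]

def antidiagForm (c : ℕ) (u : Fin m → ℂ) : ℂ :=
  u ⬝ᵥ signedAntidiag ℂ m c *ᵥ u

theorem antidiagForm_mulVec (c : ℕ) (M : Matrix (Fin m) (Fin m) ℂ) (u : Fin m → ℂ) :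
    antidiagForm c (M *ᵥ u) = u ⬝ᵥ (Mᵀ * signedAntidiag ℂ m c * M) *ᵥ u := by
  rw [antidiagForm, mulVec_mulVec, ← vecMul_transpose M u, ← dotProduct_mulVec, mulVec_mulVec,
    mul_assoc]

theorem antidiagForm_smul (c : ℕ) (a : ℂ) (u : Fin m → ℂ) :
    antidiagForm c (a • u) = a ^ 2 * antidiagForm c u := by
  rw [antidiagForm, antidiagForm, mulVec_smul, dotProduct_smul, smul_dotProduct, smul_eq_mul,
    smul_eq_mul, ← mul_assoc, sq]

theorem continuous_antidiagForm (c : ℕ) : Continuous (antidiagForm (m := m) c) :=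
  continuous_id.dotProduct (continuous_const.matrix_mulVec continuous_id)

theorem norm_antidiagForm_exp_smul_jordanBlockI_mulVec {c : ℕ} (hc : m ≤ c + 1) (β t : ℝ)
    (u : Fin m → ℂ) :
    ‖antidiagForm c (NormedSpace.exp (t • jordanBlockI m β) *ᵥ u)‖ = ‖antidiagForm c u‖ := by
  rw [exp_smul_jordanBlockI, smul_mulVec, antidiagForm_smul, antidiagForm_mulVec,
    transpose_exp_mul_signedAntidiag_mul_exp hc, norm_mul, norm_pow, Complex.norm_exp_ofReal_mul_I,
    one_pow, one_mul, antidiagForm]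

theorem norm_antidiagForm_eq_of_mem_orbitPairClosure {c : ℕ} (hc : m ≤ c + 1) {β : ℝ}
    {x y : Fin m → ℂ} (h : (x, y) ∈ orbitPairClosure m β) :
    ‖antidiagForm c x‖ = ‖antidiagForm c y‖ := by
  have hclosed : IsClosed {q : (Fin m → ℂ) × (Fin m → ℂ) |
      ‖antidiagForm c q.1‖ = ‖antidiagForm c q.2‖} :=
    isClosed_eq (continuous_antidiagForm c).fst'.norm (continuous_antidiagForm c).snd'.norm
  refine closure_minimal ?_ hclosed h
  rintro _ ⟨w, t, rfl⟩
  exact (norm_antidiagForm_exp_smul_jordanBlockI_mulVec hc β t w).symm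

theorem antidiagForm_two_mul {x : Fin m → ℂ} (j : Fin m) (hx : ∀ i, j < i → x i = 0) :
    antidiagForm (2 * j) x = (-1) ^ (j : ℕ) * x j ^ 2 := by
  have key : ∀ i k : Fin m, x i * (signedAntidiag ℂ m (2 * j) i k * x k) =
      if (i, k) = (j, j) then (-1) ^ (j : ℕ) * x j ^ 2 else 0 := by
    intro i k
    by_cases hik : (i, k) = (j, j)
    · obtain ⟨rfl, rfl⟩ := Prod.mk.inj hik
      rw [if_pos rfl, signedAntidiag, of_apply, if_pos (by omega)]
      ring
    rw [if_neg hik, signedAntidiag, of_apply]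
    split_ifs with h
    · have hij : (i : ℕ) ≠ j := fun hij => hik (by ext <;> simp <;> omega)
      rcases lt_or_gt_of_ne hij with hi | hi
      · rw [hx k (by rw [Fin.lt_def]; omega), mul_zero, mul_zero]
      · rw [hx i hi, zero_mul]
    · rw [zero_mul, mul_zero]
  simp only [antidiagForm, dotProduct, mulVec, Finset.mul_sum, key]
  rw [← Fintype.sum_prod_type']
  simp

theorem eq_zero_of_mem_orbitPairClosure {β : ℝ} {x : Fin m → ℂ}
    (hx : (x, 0) ∈ orbitPairClosure m β) (j : Fin m) (hj : m / 2 ≤ j) : x j = 0 := by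
  by_contra hne
  obtain ⟨k, hk, hmax⟩ := Finset.exists_max_image
    (univ.filter fun i : Fin m => m / 2 ≤ (i : ℕ) ∧ x i ≠ 0) id ⟨j, by simp [hj, hne]⟩
  rw [Finset.mem_filter] at hk
  have hvanish : ∀ i, k < i → x i = 0 := fun i hki => by_contra fun hi =>
    (hmax i (Finset.mem_filter.mpr ⟨mem_univ _, by rw [Fin.lt_def] at hki; omega, hi⟩)).not_gt hki
  have hform := norm_antidiagForm_eq_of_mem_orbitPairClosure (c := 2 * k) (by omega) hx
  rw [antidiagForm_two_mul k hvanish, antidiagForm, zero_dotProduct, norm_zero, norm_eq_zero,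
    mul_eq_zero, pow_eq_zero_iff two_ne_zero] at hform
  exact hform.elim (pow_ne_zero _ (neg_ne_zero.mpr one_ne_zero)) hk.2.2

theorem det_inv_factorial_sub_ne_zero {p q : ℕ} (hpq : p ≤ q + 1) :
    (of fun j l : Fin p => (((q + l - j : ℕ).factorial : ℂ))⁻¹).det ≠ 0 := by
  set M : Matrix (Fin p) (Fin p) ℂ :=
    of fun l j => (descPochhammer ℂ j).eval ((q + l : ℕ) : ℂ)
  have hfactor : (of fun j l : Fin p => (((q + l - j : ℕ).factorial : ℂ))⁻¹) =
      Mᵀ * diagonal fun l : Fin p => (((q + l : ℕ).factorial : ℂ))⁻¹ := by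
    ext j l
    have hM_apply : M l j = (descPochhammer ℂ j).eval ((q + l : ℕ) : ℂ) := rfl
    have hfac := Nat.factorial_mul_descFactorial (show (j : ℕ) ≤ q + l by omega)
    rw [mul_diagonal, transpose_apply, of_apply, hM_apply, descPochhammer_eval_eq_descFactorial,
      ← hfac]
    push_cast
    field_simp [Nat.cast_ne_zero.mpr (Nat.factorial_ne_zero (q + l - j)),
      Nat.cast_ne_zero.mpr (Nat.descFactorial_pos.mpr (show (j : ℕ) ≤ q + l by omega)).ne']
  have hM : M.det ≠ 0 := by
    rw [← det_eval_matrixOfPolynomials_eq_det_vandermonde _ _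
      (fun j => descPochhammer_natDegree ℂ j) (fun j => monic_descPochhammer ℂ j),
      det_vandermonde_ne_zero_iff]
    intro l l' h
    exact Fin.ext (by simpa using h)
  rw [hfactor, det_mul, det_transpose, det_diagonal]
  exact mul_ne_zero hM (Finset.prod_ne_zero_iff.mpr fun l _ =>
    inv_ne_zero (Nat.cast_ne_zero.mpr (Nat.factorial_ne_zero _)))

theorem exists_mulVec_exp_shiftMatrix_eq {p q : ℕ} (hpq : p ≤ q + 1) (v : Fin (q + p) → ℂ) :
    ∃ a : Fin (q + p) → ℂ, (∀ k : Fin (q + p), (k : ℕ) < q → a k = 0) ∧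
      ∀ j : Fin (q + p), (j : ℕ) < p → (NormedSpace.exp (shiftMatrix ℂ (q + p)) *ᵥ a) j = v j := by
  have hunit := (isUnit_iff_isUnit_det _).mpr (det_inv_factorial_sub_ne_zero hpq).isUnit
  obtain ⟨c, hc⟩ := mulVec_surjective_iff_isUnit.mpr hunit fun j => v (Fin.castLE (by omega) j)
  refine ⟨Fin.append 0 c, fun k hk => ?_, fun j hj => ?_⟩
  · rw [show k = Fin.castAdd p ⟨k, hk⟩ from rfl, Fin.append_left, Pi.zero_apply]
  · have hentry : ∀ l : Fin p, NormedSpace.exp (shiftMatrix ℂ (q + p)) j (Fin.natAdd q l) =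
        (((q + l - j : ℕ).factorial : ℂ))⁻¹ := fun l => by
      rw [exp_shiftMatrix_apply, Fin.val_natAdd, if_pos (by omega)]
    simp only [mulVec, dotProduct, Fin.sum_univ_add, Fin.append_left, Fin.append_right,
      Pi.zero_apply, mul_zero, Finset.sum_const_zero, zero_add, hentry]
    exact congrFun hc ⟨j, hj⟩

theorem exp_smul_shiftMatrix_mulVec_rescale {s : ℂ} (hs : s ≠ 0) (v : Fin m → ℂ) :
    NormedSpace.exp (s • shiftMatrix ℂ m) *ᵥ (fun k : Fin m => s⁻¹ ^ (k : ℕ) * v k) =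
      fun i : Fin m => s⁻¹ ^ (i : ℕ) * (NormedSpace.exp (shiftMatrix ℂ m) *ᵥ v) i := by
  ext i
  simp only [mulVec, dotProduct, Finset.mul_sum]
  refine Finset.sum_congr rfl fun k _ => ?_
  rw [exp_shiftMatrix_apply, exp_smul_shiftMatrix_apply]
  split_ifs with hik
  · have hpow : s⁻¹ ^ (k : ℕ) = s⁻¹ ^ (i : ℕ) * s⁻¹ ^ ((k : ℕ) - i) := by
      rw [← pow_add, Nat.add_sub_cancel' hik]
    rw [hpow, inv_pow s ((k : ℕ) - i)]
    field_simp
  · simp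

theorem tendsto_inv_pow_mul_sum_pow_mul {n : ℕ} (k : ℕ) (f : Fin n → ℂ)
    (hf : ∀ i : Fin n, k ≤ i → f i = 0) :
    Tendsto (fun s : ℝ => (s : ℂ)⁻¹ ^ k * ∑ i : Fin n, (s : ℂ) ^ (i : ℕ) * f i) atTop (𝓝 0) := by
  have hinv : Tendsto (fun s : ℝ => (s : ℂ)⁻¹) atTop (𝓝 0) := by
    simpa [Function.comp_def] using
      (Complex.continuous_ofReal.tendsto 0).comp tendsto_inv_atTop_zero
  simp_rw [Finset.mul_sum]
  rw [← Finset.sum_const_zero (s := (univ : Finset (Fin n)))]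
  refine tendsto_finsetSum _ fun i _ => ?_
  by_cases hik : (i : ℕ) < k
  · have hlim := (hinv.pow (k - i)).mul_const (f i)
    rw [zero_pow (by omega), zero_mul] at hlim
    refine hlim.congr' ((eventually_ne_atTop 0).mono fun s hs => ?_)
    have hs' : (s : ℂ) ≠ 0 := Complex.ofReal_ne_zero.mpr hs
    have hpow : (s : ℂ)⁻¹ ^ k = (s : ℂ)⁻¹ ^ (k - i) * (s : ℂ)⁻¹ ^ (i : ℕ) := by
      rw [← pow_add, Nat.sub_add_cancel hik.le]
    dsimp only
    rw [hpow, inv_pow (s : ℂ) i]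
    field_simp
  · simp [hf i (by omega)]

theorem exists_tendsto_exp_smul_shiftMatrix_mulVec {p q : ℕ} (hpq : p ≤ q) (hm : q + p = m)
    {x : Fin m → ℂ} (hx : ∀ j : Fin m, p ≤ j → x j = 0) :
    ∃ y : ℝ → Fin m → ℂ, Tendsto y atTop (𝓝 0) ∧
      Tendsto (fun s : ℝ => NormedSpace.exp ((s : ℂ) • shiftMatrix ℂ m) *ᵥ y s) atTop (𝓝 x) := by
  subst hm
  choose a ha_supp ha_exp using fun i : Fin (q + p) =>
    exists_mulVec_exp_shiftMatrix_eq (by omega : p ≤ q + 1) (Pi.single i 1)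
  -- `A s` has first `p` coordinates `s^j x_j` after applying `e^N`; dividing its `k`-th
  -- coordinate by `s^k` turns `e^N` into `e^{sN}`.
  set A : ℝ → Fin (q + p) → ℂ := fun s => ∑ i : Fin (q + p), ((s : ℂ) ^ (i : ℕ) * x i) • a i
  have hA : ∀ (M : Matrix (Fin (q + p)) (Fin (q + p)) ℂ) s k,
      (M *ᵥ A s) k = ∑ i : Fin (q + p), (s : ℂ) ^ (i : ℕ) * (x i * (M *ᵥ a i) k) := fun M s k => by
    simp only [A, mulVec_sum, mulVec_smul, Finset.sum_apply, Pi.smul_apply, smul_eq_mul, mul_assoc]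
  refine ⟨fun s k => (s : ℂ)⁻¹ ^ (k : ℕ) * A s k, tendsto_pi_nhds.mpr fun k => ?_,
    tendsto_pi_nhds.mpr fun j => ?_⟩
  · have hlim := tendsto_inv_pow_mul_sum_pow_mul k (fun i => x i * a i k) fun i hki => by
      by_cases hk : (k : ℕ) < q
      · rw [ha_supp i k hk, mul_zero]
      · rw [hx i (by omega), zero_mul]
    refine hlim.congr fun s => ?_
    have hAs := hA 1 s k
    rw [one_mulVec] at hAs
    simp only [hAs, one_mulVec]
  · refine Tendsto.congr' (f₁ := fun s : ℝ => (s : ℂ)⁻¹ ^ (j : ℕ) *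
      ∑ i : Fin (q + p), (s : ℂ) ^ (i : ℕ) * (x i * (NormedSpace.exp (shiftMatrix ℂ _) *ᵥ a i) j))
      ?_ ?_
    · filter_upwards [eventually_ne_atTop 0] with s hs
      rw [exp_smul_shiftMatrix_mulVec_rescale (Complex.ofReal_ne_zero.mpr hs)]
      dsimp only
      rw [hA]
    by_cases hj : (j : ℕ) < p
    · refine tendsto_const_nhds.congr' ((eventually_ne_atTop 0).mono fun s hs => ?_)
      simp only [ha_exp _ j hj, Pi.single_apply, mul_ite, mul_one, mul_zero, Finset.sum_ite_eq,
        Finset.mem_univ, if_true]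
      rw [← mul_assoc, ← mul_pow, inv_mul_cancel₀ (Complex.ofReal_ne_zero.mpr hs), one_pow, one_mul]
    · rw [hx j (by omega)]
      exact tendsto_inv_pow_mul_sum_pow_mul j _ fun i hji => by rw [hx i (by omega), zero_mul]

theorem mem_orbitPairClosure_of_tendsto {β : ℝ} {x : Fin m → ℂ} {y : ℝ → Fin m → ℂ}
    (hy : Tendsto y atTop (𝓝 0))
    (hx : Tendsto (fun s : ℝ => NormedSpace.exp ((s : ℂ) • shiftMatrix ℂ m) *ᵥ y s) atTop (𝓝 x)) :
    (x, 0) ∈ orbitPairClosure m β := by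
  have horbit : ∀ s : ℝ, NormedSpace.exp ((-s) • jordanBlockI m β) *ᵥ
      (NormedSpace.exp ((s : ℂ) • shiftMatrix ℂ m) *ᵥ y s) =
        Complex.exp (↑(-s * β) * Complex.I) • y s := fun s => by
    rw [exp_smul_jordanBlockI, smul_mulVec, mulVec_mulVec, ← Matrix.exp_add_of_commute _ _
      ((Commute.refl _).smul_left _ |>.smul_right _), Complex.ofReal_neg, neg_smul, neg_add_cancel,
      NormedSpace.exp_zero, one_mulVec]
  have hy' : Tendsto (fun s : ℝ => Complex.exp (↑(-s * β) * Complex.I) • y s) atTop (𝓝 0) := by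
    rw [tendsto_zero_iff_norm_tendsto_zero] at hy ⊢
    simpa only [norm_smul, Complex.norm_exp_ofReal_mul_I, one_mul] using hy
  refine mem_closure_of_tendsto (hx.prodMk_nhds (hy'.congr fun s => (horbit s).symm)) ?_
  exact Eventually.of_forall fun s => ⟨_, -s, rfl⟩

theorem Y_of_jordan_orbit_space_general (m : ℕ) (β : ℝ) :
    ({0} ∪ {x : Fin m → ℂ | (x, 0) ∈ orbitPairClosure m β} : Set (Fin m → ℂ))
    = {x : Fin m → ℂ | ∀ j : Fin m, m / 2 ≤ (j : ℕ) → x j = 0} := by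
  ext x
  simp only [Set.mem_union, Set.mem_singleton_iff, Set.mem_ofPred_eq]
  refine ⟨?_, fun hx => Or.inr ?_⟩
  · rintro (rfl | hx)
    · exact fun _ _ => rfl
    · exact eq_zero_of_mem_orbitPairClosure hx
  · obtain ⟨y, hy, hxy⟩ :=
      exists_tendsto_exp_smul_shiftMatrix_mulVec (q := m - m / 2) (by omega) (by omega) hx
    exact mem_orbitPairClosure_of_tendsto hy hxy

/-- **Proposition 6.1, operator `Y` on a Jordan block.** For the flow of an `m × m`
(`m ≥ 1`) Jordan block `J` with eigenvalue `iβ`, the set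
`{0} ∪ {x : (x, 0) lies in the closure of the set of pairs of points on a common orbit}`
equals the subspace of vectors supported on the first `⌊m/2⌋` coordinates. -/
theorem Y_of_jordan_orbit_space (m : ℕ) (hm : 1 ≤ m) (β : ℝ) :
    ({0} ∪ {x : Fin m → ℂ | (x, 0) ∈ orbitPairClosure m β} : Set (Fin m → ℂ))
    = {x : Fin m → ℂ | ∀ j : Fin m, m / 2 ≤ (j : ℕ) → x j = 0} :=
  Y_of_jordan_orbit_space_general m β
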